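/- arXiv:2412.10128 — 2 statements merged into one kernel-verified Lean document; each statement's English description precedes it below -/
import Mathlib

section
/- Let L ∈ ℝ^{m×r} satisfy LᵀL = I_r, let D = diag(d₁, …, d_r) with all dⱼ > 0, and let λ > 0. Then the matrix Σ = L D Lᵀ + λ I_m is invertible and, for all x, μ ∈ ℝ^m, the Mahalanobis distance satisfies (x − μ)ᵀ Σ⁻¹ (x − μ) = ‖x − μ‖²/λ − ‖u(x)‖²/λ, where u(x) = diag(√(d₁/(d₁+λ)), …, √(d_r/(d_r+λ))) · Lᵀ (x − μ) and ‖·‖ denotes the Euclidean norm. -/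
open Matrix

/-- Let `L ∈ ℝ^{m×r}` satisfy `LᵀL = I_r`, let `D = diag(d₁,…,d_r)`
with all `dⱼ > 0`, and let `λ > 0`.  Then `Σ = L D Lᵀ + λ I_m` is invertible and for
all `x, μ ∈ ℝ^m` the Mahalanobis distance satisfies
`(x−μ)ᵀ Σ⁻¹ (x−μ) = ‖x−μ‖²/λ − ‖u(x)‖²/λ`, where
`u(x) = diag(√(dⱼ/(dⱼ+λ))) Lᵀ (x−μ)` and `‖·‖` is the Euclidean norm
(squared Euclidean norms are written as sums of squares of the coordinates). -/
theorem rscore_identity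
    (m r : ℕ) (L : Matrix (Fin m) (Fin r) ℝ) (hL : Lᵀ * L = 1)
    (dv : Fin r → ℝ) (hdv : ∀ j, 0 < dv j) (lam : ℝ) (hlam : 0 < lam) :
    IsUnit (L * Matrix.diagonal dv * Lᵀ + lam • (1 : Matrix (Fin m) (Fin m) ℝ)).det ∧
    ∀ x μ : Fin m → ℝ,
      (x - μ) ⬝ᵥ ((L * Matrix.diagonal dv * Lᵀ + lam • (1 : Matrix (Fin m) (Fin m) ℝ))⁻¹
          *ᵥ (x - μ)) =
        (∑ i, (x i - μ i) ^ 2) / lam -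
        (∑ j, ((Matrix.diagonal (fun j => Real.sqrt (dv j / (dv j + lam)))
            *ᵥ (Lᵀ *ᵥ (x - μ))) j) ^ 2) / lam := by
  set e : Fin r → ℝ := fun j => dv j / (dv j + lam) with he
  set S : Matrix (Fin m) (Fin m) ℝ :=
    L * Matrix.diagonal dv * Lᵀ + lam • (1 : Matrix (Fin m) (Fin m) ℝ) with hS
  set B : Matrix (Fin m) (Fin m) ℝ :=
    lam⁻¹ • ((1 : Matrix (Fin m) (Fin m) ℝ) - L * Matrix.diagonal e * Lᵀ) with hB
  have hpos : ∀ j, (0:ℝ) < dv j + lam := fun j => add_pos (hdv j) hlam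
  have hkey : Matrix.diagonal dv * Matrix.diagonal e + lam • Matrix.diagonal e
      = Matrix.diagonal dv := by
    rw [Matrix.diagonal_mul_diagonal, Matrix.smul_eq_diagonal_mul,
      Matrix.diagonal_mul_diagonal, Matrix.diagonal_add]
    refine congrArg Matrix.diagonal (funext fun j => ?_)
    have h := (hpos j).ne'
    field_simp [he]
    exact div_mul_cancel₀ (dv j) h
  have hSLE : S * (L * Matrix.diagonal e * Lᵀ) = L * Matrix.diagonal dv * Lᵀ := by
    rw [hS, Matrix.add_mul]
    have h1 : L * Matrix.diagonal dv * Lᵀ * (L * Matrix.diagonal e * Lᵀ)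
        = L * (Matrix.diagonal dv * Matrix.diagonal e) * Lᵀ := by
      calc L * Matrix.diagonal dv * Lᵀ * (L * Matrix.diagonal e * Lᵀ)
          = L * Matrix.diagonal dv * (Lᵀ * L) * (Matrix.diagonal e * Lᵀ) := by
            simp only [Matrix.mul_assoc]
        _ = L * (Matrix.diagonal dv * Matrix.diagonal e) * Lᵀ := by
            rw [hL, Matrix.mul_one]; simp only [Matrix.mul_assoc]
    have h2 : lam • (1 : Matrix (Fin m) (Fin m) ℝ) * (L * Matrix.diagonal e * Lᵀ)
        = L * (lam • Matrix.diagonal e) * Lᵀ := by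
      rw [Matrix.smul_mul, Matrix.one_mul, Matrix.mul_smul, Matrix.smul_mul]
    rw [h1, h2, Matrix.mul_assoc, Matrix.mul_assoc L (lam • Matrix.diagonal e),
      ← Matrix.mul_add, ← Matrix.add_mul, hkey, ← Matrix.mul_assoc]
  have hSB : S * B = 1 := by
    rw [hB, Matrix.mul_smul, Matrix.mul_sub, Matrix.mul_one, hSLE, hS,
      add_sub_cancel_left, smul_smul, inv_mul_cancel₀ hlam.ne', one_smul]
  refine ⟨Matrix.isUnit_det_of_right_inverse hSB, ?_⟩
  have hinv : S⁻¹ = B := Matrix.inv_eq_right_inv hSB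
  intro x μ
  set v : Fin m → ℝ := x - μ with hv
  have hLELv : (L * Matrix.diagonal e * Lᵀ) *ᵥ v
      = L *ᵥ (Matrix.diagonal e *ᵥ (Lᵀ *ᵥ v)) := by
    rw [Matrix.mulVec_mulVec, Matrix.mulVec_mulVec]
  rw [hinv, hB, Matrix.smul_mulVec, dotProduct_smul, Matrix.sub_mulVec,
    Matrix.one_mulVec, dotProduct_sub, hLELv, Matrix.dotProduct_mulVec,
    ← Matrix.mulVec_transpose]
  have h1 : v ⬝ᵥ v = ∑ i, (x i - μ i) ^ 2 := by
    simp [dotProduct, hv, sq]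
  have h2 : (Lᵀ *ᵥ v) ⬝ᵥ (Matrix.diagonal e *ᵥ (Lᵀ *ᵥ v))
      = ∑ j, ((Matrix.diagonal (fun j => Real.sqrt (dv j / (dv j + lam)))
          *ᵥ (Lᵀ *ᵥ (x - μ))) j) ^ 2 := by
    rw [← hv]
    simp only [dotProduct, Matrix.mulVec_diagonal]
    refine Finset.sum_congr rfl fun j _ => ?_
    have hnn : 0 ≤ dv j / (dv j + lam) := div_nonneg (hdv j).le (hpos j).le
    rw [mul_pow, Real.sq_sqrt hnn, he]
    ring
  rw [h1, h2]
  rw [smul_eq_mul, ← hv]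
  field_simp
end

section
/- Let L ∈ ℝ^{m×r}, let D ∈ ℝ^{r×r} and Ψ ∈ ℝ^{m×m} be diagonal matrices with strictly positive diagonal entries, and set Σ = L D Lᵀ + Ψ. Suppose that the whitened matrix Σ' = Ψ^{-1/2} Σ Ψ^{-1/2} admits a decomposition Σ' = L' D' L'ᵀ + I_m with L' ∈ ℝ^{m×r} satisfying L'ᵀL' = I_r and D' = diag(d'₁, …, d'_r) with all d'ⱼ > 0. Then Σ is invertible and, for all x, μ ∈ ℝ^m, (x − μ)ᵀ Σ⁻¹ (x − μ) = ‖Ψ^{-1/2}(x − μ)‖² − ‖ diag(√(d'₁/(d'₁+1)), …, √(d'_r/(d'_r+1))) · L'ᵀ Ψ^{-1/2}(x − μ) ‖², where ‖·‖ denotes the Euclidean norm. -/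
open Matrix

/-- Let `L ∈ ℝ^{m×r}`, let `D = diag(dv)` and `Ψ = diag(ψ)` have
strictly positive diagonal entries, and set `Σ = L D Lᵀ + Ψ`.  Suppose the whitened
matrix `Σ' = Ψ^{-1/2} Σ Ψ^{-1/2}` admits a decomposition `Σ' = L' D' L'ᵀ + I_m` with
`L'ᵀL' = I_r` and `D' = diag(dv')`, all `dv'ⱼ > 0`.  Then `Σ` is invertible and for
all `x, μ ∈ ℝ^m`,
`(x−μ)ᵀ Σ⁻¹ (x−μ) = ‖Ψ^{-1/2}(x−μ)‖² − ‖diag(√(dv'ⱼ/(dv'ⱼ+1))) L'ᵀ Ψ^{-1/2}(x−μ)‖²`,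
where `Ψ^{-1/2}` is the diagonal matrix of reciprocal square roots of `ψ` and squared
Euclidean norms are written as sums of squares of the coordinates. -/
theorem generalized_rscore_identity
    (m r : ℕ) (L : Matrix (Fin m) (Fin r) ℝ)
    (dv : Fin r → ℝ) (hdv : ∀ j, 0 < dv j)
    (ψ : Fin m → ℝ) (hψ : ∀ i, 0 < ψ i)
    (L' : Matrix (Fin m) (Fin r) ℝ) (hL' : L'ᵀ * L' = 1)
    (dv' : Fin r → ℝ) (hdv' : ∀ j, 0 < dv' j)
    (hdecomp :
      Matrix.diagonal (fun i => (Real.sqrt (ψ i))⁻¹) *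
          (L * Matrix.diagonal dv * Lᵀ + Matrix.diagonal ψ) *
          Matrix.diagonal (fun i => (Real.sqrt (ψ i))⁻¹) =
        L' * Matrix.diagonal dv' * L'ᵀ + 1) :
    IsUnit (L * Matrix.diagonal dv * Lᵀ + Matrix.diagonal ψ).det ∧
    ∀ x μ : Fin m → ℝ,
      (x - μ) ⬝ᵥ ((L * Matrix.diagonal dv * Lᵀ + Matrix.diagonal ψ)⁻¹ *ᵥ (x - μ)) =
        (∑ i, ((Matrix.diagonal (fun i => (Real.sqrt (ψ i))⁻¹) *ᵥ (x - μ)) i) ^ 2) -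
        (∑ j, ((Matrix.diagonal (fun j => Real.sqrt (dv' j / (dv' j + 1)))
            *ᵥ (L'ᵀ *ᵥ (Matrix.diagonal (fun i => (Real.sqrt (ψ i))⁻¹) *ᵥ (x - μ)))) j) ^ 2) := by
  classical
  set P : Matrix (Fin m) (Fin m) ℝ := Matrix.diagonal (fun i => (Real.sqrt (ψ i))⁻¹) with hP
  set Q : Matrix (Fin m) (Fin m) ℝ := Matrix.diagonal (fun i => Real.sqrt (ψ i)) with hQ
  set Sg : Matrix (Fin m) (Fin m) ℝ := L * Matrix.diagonal dv * Lᵀ + Matrix.diagonal ψ with hSg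
  set E : Matrix (Fin r) (Fin r) ℝ := Matrix.diagonal (fun j => dv' j / (dv' j + 1)) with hE
  set B : Matrix (Fin m) (Fin m) ℝ := 1 - L' * E * L'ᵀ with hB
  have hsq : ∀ i, Real.sqrt (ψ i) ≠ 0 := fun i => (Real.sqrt_pos.2 (hψ i)).ne'
  have hd1 : ∀ j, dv' j + 1 ≠ 0 := fun j => by have := hdv' j; linarith
  have hPQ : P * Q = 1 := by
    rw [hP, hQ, Matrix.diagonal_mul_diagonal]
    rw [show (fun i => (Real.sqrt (ψ i))⁻¹ * Real.sqrt (ψ i)) = fun _ => (1:ℝ) from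
      funext fun i => inv_mul_cancel₀ (hsq i), Matrix.diagonal_one]
  have hQP : Q * P = 1 := by
    rw [hQ, hP, Matrix.diagonal_mul_diagonal]
    rw [show (fun i => Real.sqrt (ψ i) * (Real.sqrt (ψ i))⁻¹) = fun _ => (1:ℝ) from
      funext fun i => mul_inv_cancel₀ (hsq i), Matrix.diagonal_one]
  have hD'split : Matrix.diagonal dv' = Matrix.diagonal dv' * E + E := by
    rw [hE, Matrix.diagonal_mul_diagonal, Matrix.diagonal_add]
    refine congrArg Matrix.diagonal (funext fun j => ?_)
    have h1 : dv' j + 1 ≠ 0 := hd1 j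
    field_simp
  have hcancel : ∀ X : Matrix (Fin r) (Fin m) ℝ, L'ᵀ * (L' * X) = X := fun X => by
    rw [← Matrix.mul_assoc, hL', Matrix.one_mul]
  have hAM : L' * Matrix.diagonal dv' * L'ᵀ * (L' * E * L'ᵀ)
      = L' * (Matrix.diagonal dv' * E) * L'ᵀ := by
    simp only [Matrix.mul_assoc]
    rw [hcancel]
  have hSB : (L' * Matrix.diagonal dv' * L'ᵀ + 1) * B = 1 := by
    rw [hB]
    have expand : (L' * Matrix.diagonal dv' * L'ᵀ + 1) * (1 - L' * E * L'ᵀ)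
        = L' * Matrix.diagonal dv' * L'ᵀ + 1
          - (L' * Matrix.diagonal dv' * L'ᵀ * (L' * E * L'ᵀ) + L' * E * L'ᵀ) := by
      noncomm_ring
    rw [expand, hAM]
    nth_rewrite 1 [hD'split]
    rw [Matrix.mul_add, Matrix.add_mul]
    abel
  have hSgeq : Sg = Q * (L' * Matrix.diagonal dv' * L'ᵀ + 1) * Q := by
    rw [← hdecomp]
    rw [show Q * (P * Sg * P) * Q = Q * P * Sg * (P * Q) from by noncomm_ring, hQP, hPQ,
      one_mul, mul_one]
  have hright : Sg * (P * B * P) = 1 := by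
    rw [hSgeq]
    have a1 : Q * (L' * Matrix.diagonal dv' * L'ᵀ + 1) * Q * (P * B * P)
        = Q * ((L' * Matrix.diagonal dv' * L'ᵀ + 1) * (Q * P * (B * P))) := by noncomm_ring
    rw [a1, hQP, one_mul]
    have a2 : Q * ((L' * Matrix.diagonal dv' * L'ᵀ + 1) * (B * P))
        = Q * ((L' * Matrix.diagonal dv' * L'ᵀ + 1) * B) * P := by noncomm_ring
    rw [a2, hSB, mul_one, hQP]
  refine ⟨Matrix.isUnit_det_of_right_inverse hright, fun x μ => ?_⟩
  rw [Matrix.inv_eq_right_inv hright]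
  set v : Fin m → ℝ := x - μ with hv
  set y : Fin m → ℝ := P *ᵥ v with hy
  set z : Fin r → ℝ := L'ᵀ *ᵥ y with hz
  have hPsym : Pᵀ = P := Matrix.diagonal_transpose _
  have hdotP : ∀ w : Fin m → ℝ, v ⬝ᵥ (P *ᵥ w) = y ⬝ᵥ w := by
    intro w
    rw [Matrix.dotProduct_mulVec, ← hPsym, Matrix.vecMul_transpose, ← hy]
  have hlhs : v ⬝ᵥ ((P * B * P) *ᵥ v) = y ⬝ᵥ (B *ᵥ y) := by
    rw [← Matrix.mulVec_mulVec, ← Matrix.mulVec_mulVec, ← hy, hdotP]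
  rw [hlhs, hB, Matrix.sub_mulVec, Matrix.one_mulVec, dotProduct_sub]
  have hterm1 : y ⬝ᵥ y = ∑ i, y i ^ 2 := by
    simp [dotProduct, sq]
  have hterm2 : y ⬝ᵥ ((L' * E * L'ᵀ) *ᵥ y) = z ⬝ᵥ (E *ᵥ z) := by
    rw [← Matrix.mulVec_mulVec, ← Matrix.mulVec_mulVec, ← hz, Matrix.dotProduct_mulVec,
      ← Matrix.transpose_transpose L', Matrix.vecMul_transpose,
      ← hz]
  rw [hterm1, hterm2]
  congr 1
  rw [hE]
  simp only [Matrix.mulVec_diagonal, dotProduct]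
  refine Finset.sum_congr rfl fun j _ => ?_
  have he : 0 ≤ dv' j / (dv' j + 1) := by
    have h1 := hdv' j
    positivity
  rw [mul_pow, Real.sq_sqrt he]
  ring
end
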